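/- arXiv:1612.06473 — 3 statements merged into one kernel-verified Lean document; each statement's English description precedes it below -/
import Mathlib

section
/- The odd-even transposition sort on the path P_n sorts correctly: starting from any arrangement of n distinct keys on vertices 1,...,n, after n rounds—where in odd rounds we compare-exchange pairs (i,i+1) for all odd i, and in even rounds we compare-exchange pairs (i,i+1) for all even i, always placing the smaller key on the lower-indexed vertex—the keys are in sorted order (vertex i holds the key of rank i). -/
/-- One round of odd-even transposition sort on the path with `n` vertices
(`0`-indexed positions).  Positions `v` with `v % 2 = p % 2` are the lower
endpoints of the compared pairs `(v, v+1)`; the smaller key goes to the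
lower-indexed vertex. -/
noncomputable def oeStep (n : ℕ) (p : ℕ) (f : Fin n → ℕ) : Fin n → ℕ := fun v =>
  if v.val % 2 = p % 2 then
    if h : v.val + 1 < n then min (f v) (f ⟨v.val + 1, h⟩) else f v
  else
    if v.val ≠ 0 then
      max (f ⟨v.val - 1, lt_of_le_of_lt (Nat.sub_le _ _) v.isLt⟩) (f v)
    else f v

/-- Running `t` rounds of odd-even transposition sort (round `t+1` compares the
pairs `(i, i+1)` with `i ≡ t (mod 2)` in `0`-indexed positions, i.e. odd rounds
compare pairs with odd lower index in `1`-indexed positions). -/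
noncomputable def oeRun (n : ℕ) : ℕ → (Fin n → ℕ) → (Fin n → ℕ)
  | 0, f => f
  | t + 1, f => oeStep n t (oeRun n t f)

/-!
Fix a threshold `c` and watch only the positions holding keys `≥ c`. A compare-exchange moves
these positions as it would move the ones of a 0-1 sequence: each stays put or hops one step
to the right onto a smaller key, and they never overtake one another. Numbering them from the
right, with a sentinel `0` at position `n`, the `j`-th one is, from round `j` on, either at its
final place `n - j` or about to hop in the current round; so it advances every round until it
settles, and after `n` rounds the keys `≥ c` fill the last positions. This holds for every `c`,
so the output is monotone; and since the number of keys `≥ c` never changes, distinct keys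
remain distinct.
-/

namespace OddEvenSort

open Finset

def positionsGE (n c : ℕ) (b : Fin n → ℕ) : Finset ℕ :=
  (univ.filter fun v => c ≤ b v).map Fin.valEmbedding

theorem mem_positionsGE {n c x : ℕ} {b : Fin n → ℕ} :
    x ∈ positionsGE n c b ↔ ∃ h : x < n, c ≤ b ⟨x, h⟩ := by
  simp only [positionsGE, mem_map, mem_filter, mem_univ, true_and,
    Fin.valEmbedding_apply]
  exact ⟨fun ⟨v, hv, hvx⟩ => hvx ▸ ⟨v.isLt, hv⟩, fun ⟨h, hc⟩ => ⟨⟨x, h⟩, hc, rfl⟩⟩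

def hop (n t : ℕ) (S : Finset ℕ) (y : ℕ) : ℕ :=
  if y % 2 = t % 2 ∧ y + 1 < n ∧ y + 1 ∉ S then y + 1 else y

theorem positionsGE_oeStep (n t c : ℕ) (b : Fin n → ℕ) :
    positionsGE n c (oeStep n t b) =
      (positionsGE n c b).image (hop n t (positionsGE n c b)) := by
  set S := positionsGE n c b
  ext x
  rw [mem_image, mem_positionsGE]
  constructor
  · rintro ⟨hx, hc⟩
    simp only [oeStep] at hc
    split_ifs at hc with hpar hnext hx0
    · rw [le_min_iff] at hc
      have hnextS : x + 1 ∈ S := mem_positionsGE.2 ⟨hnext, hc.2⟩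
      exact ⟨x, mem_positionsGE.2 ⟨hx, hc.1⟩, by simp [hop, hnextS]⟩
    · exact ⟨x, mem_positionsGE.2 ⟨hx, hc⟩, by simp [hop, hnext]⟩
    · by_cases hxS : x ∈ S
      · exact ⟨x, hxS, by simp [hop, hpar]⟩
      · have hprev := (le_max_iff.1 hc).resolve_right fun h => hxS (mem_positionsGE.2 ⟨hx, h⟩)
        have hx1 : x - 1 + 1 = x := by omega
        refine ⟨x - 1, mem_positionsGE.2 ⟨_, hprev⟩, ?_⟩
        rw [hop, if_pos ⟨by omega, by omega, by rwa [hx1]⟩, hx1]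
    · exact ⟨x, mem_positionsGE.2 ⟨hx, hc⟩, by simp [hop, hpar]⟩
  · rintro ⟨y, hy, rfl⟩
    obtain ⟨hyn, hc⟩ := mem_positionsGE.1 hy
    unfold hop
    split_ifs with hmove
    · refine ⟨hmove.2.1, ?_⟩
      simp only [oeStep]
      rw [if_neg (by omega), if_pos (by omega)]
      exact le_max_of_le_left (by simpa using hc)
    · refine ⟨hyn, ?_⟩
      simp only [oeStep]
      split_ifs with hpar hnext
      · obtain ⟨_, hc'⟩ := mem_positionsGE.1 (not_not.1 fun h => hmove ⟨hpar, hnext, h⟩)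
        exact le_min hc hc'
      · exact hc
      · exact le_max_of_le_right hc
      · exact hc

abbrev Moves (t : ℕ) (p : ℕ → ℕ) (j : ℕ) : Prop :=
  p j % 2 = t % 2 ∧ p j + 1 < p (j - 1)

/-- Particle `0` serves as a sentinel: since `0 - 1 = 0`, it never moves. -/
def advance (t : ℕ) (p : ℕ → ℕ) (j : ℕ) : ℕ :=
  if Moves t p j then p j + 1 else p j

def trajectory (p : ℕ → ℕ) : ℕ → ℕ → ℕ
  | 0 => p
  | t + 1 => advance t (trajectory p t)

section Particles

variable {n k t : ℕ} {p : ℕ → ℕ}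

theorem advance_zero : advance t p 0 = p 0 := by
  simp [advance]

theorem le_advance (j : ℕ) : p j ≤ advance t p j := by
  unfold advance
  split_ifs <;> omega

theorem strictAntiOn_advance (hp : StrictAntiOn p (Set.Iic k)) :
    StrictAntiOn (advance t p) (Set.Iic k) := by
  intro i hi j hj hij
  refine lt_of_lt_of_le ?_ (le_advance i)
  unfold advance
  split_ifs with hmove
  · have : p (j - 1) ≤ p i :=
      hp.antitoneOn hi (show j - 1 ∈ Set.Iic k by simp at hj ⊢; omega) (by omega)
    omega
  · exact hp hi hj hij

theorem trajectory_apply_zero (p : ℕ → ℕ) (t : ℕ) : trajectory p t 0 = p 0 := by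
  induction t with
  | zero => rfl
  | succ t ih => rw [trajectory, advance_zero, ih]

theorem strictAntiOn_trajectory (hp : StrictAntiOn p (Set.Iic k)) (t : ℕ) :
    StrictAntiOn (trajectory p t) (Set.Iic k) := by
  induction t with
  | zero => exact hp
  | succ t ih => exact strictAntiOn_advance ih

theorem add_le_of_strictAntiOn (hp : StrictAntiOn p (Set.Iic k)) {j : ℕ} (hj : j ≤ k) :
    p j + j ≤ p 0 := by
  induction j with
  | zero => simp
  | succ j ih =>
    have hlt := hp (show j ∈ Set.Iic k by simp; omega) (show j + 1 ∈ Set.Iic k by simpa)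
      j.lt_succ_self
    have := ih (by omega)
    omega

/-- A particle of the right parity that cannot move sits directly behind particle `j`, which has
the wrong parity to move and so must be settled. -/
theorem settled_of_blocked (hp : StrictAntiOn p (Set.Iic k)) {j : ℕ} (hj : j + 1 ≤ k)
    (hpar : p (j + 1) % 2 = t % 2) (hblocked : ¬ Moves t p (j + 1))
    (hahead : n - j ≤ p j ∨ Moves t p j) : n - (j + 1) ≤ p (j + 1) := by
  have hlt := hp (show j ∈ Set.Iic k by simp; omega) (show j + 1 ∈ Set.Iic k by simpa)
    j.lt_succ_self
  have hnext : p j = p (j + 1) + 1 := by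
    simp only [Moves, Nat.add_sub_cancel, not_and, not_lt] at hblocked
    have := hblocked hpar
    omega
  rcases hahead with h | ⟨h, -⟩ <;> omega

theorem settled_or_moves (hp0 : p 0 = n) (hp : StrictAntiOn p (Set.Iic k)) :
    ∀ j ≤ k, ∀ t ≥ j, n - j ≤ trajectory p t j ∨ Moves t (trajectory p t) j := by
  intro j
  induction j with
  | zero =>
    intro _ t _
    simp [trajectory_apply_zero, hp0]
  | succ j ih =>
    intro hj t hjt
    obtain ⟨s, rfl⟩ : ∃ s, t = s + 1 := ⟨t - 1, by omega⟩
    by_contra! hstuck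
    obtain ⟨hunsettled, hnotmove⟩ := hstuck
    by_cases hpar : trajectory p (s + 1) (j + 1) % 2 = (s + 1) % 2
    · have := settled_of_blocked (strictAntiOn_trajectory hp (s + 1)) hj hpar hnotmove
        (ih (by omega) _ (by omega))
      omega
    · have hstay : ¬ Moves s (trajectory p s) (j + 1) := fun hmove => by
        simp only [trajectory, advance, if_pos hmove] at hpar
        omega
      have hsame : trajectory p (s + 1) (j + 1) = trajectory p s (j + 1) := by
        simp only [trajectory, advance, if_neg hstay]
      have := settled_of_blocked (strictAntiOn_trajectory hp s) hj (by omega) hstay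
        (ih (by omega) _ (by omega))
      omega

theorem min_sub_le_trajectory (hp0 : p 0 = n) (hp : StrictAntiOn p (Set.Iic k)) {j : ℕ}
    (hj : j ≤ k) (t : ℕ) : min (n - j) (t - j) ≤ trajectory p t j := by
  induction t with
  | zero => simp
  | succ t ih =>
    by_cases hjt : j ≤ t
    · have hmono := le_advance (t := t) (p := trajectory p t) j
      rcases settled_or_moves hp0 hp j hj t hjt with hsettled | hmove
      · simp only [trajectory]; omega
      · simp only [trajectory, advance, if_pos hmove]; omega
    · omega

theorem trajectory_self (hp0 : p 0 = n) (hp : StrictAntiOn p (Set.Iic k)) {j : ℕ}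
    (hj : j ≤ k) : trajectory p n j = n - j := by
  have hlow := min_sub_le_trajectory hp0 hp hj n
  have hhigh := add_le_of_strictAntiOn (strictAntiOn_trajectory hp n) hj
  rw [trajectory_apply_zero, hp0] at hhigh
  omega

theorem hop_eq_advance (hp0 : p 0 = n) (hp : StrictAntiOn p (Set.Iic k)) {j : ℕ}
    (hj : j ∈ Icc 1 k) : hop n t ((Icc 1 k).image p) (p j) = advance t p j := by
  rw [mem_Icc] at hj
  have hahead : p j < p (j - 1) := hp (by simp; omega) (by simpa using hj.2) (by omega)
  have hfree : p j + 1 < n ∧ p j + 1 ∉ (Icc 1 k).image p ↔ p j + 1 < p (j - 1) := by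
    constructor
    · rintro ⟨hn, hnot⟩
      by_contra! hle
      have heq : p (j - 1) = p j + 1 := by omega
      rcases Nat.eq_zero_or_pos (j - 1) with h0 | hpos
      · rw [h0, hp0] at heq
        omega
      · exact hnot (mem_image.2 ⟨j - 1, mem_Icc.2 ⟨hpos, by omega⟩, heq⟩)
    · intro hlt
      refine ⟨hlt.trans_le (hp0 ▸ hp.antitoneOn (by simp) (by simp; omega) (Nat.zero_le _)), ?_⟩
      rintro hmem
      obtain ⟨i, hi, hpi⟩ := mem_image.1 hmem
      rw [mem_Icc] at hi
      rcases lt_or_ge i j with hij | hij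
      · have := hp.antitoneOn (show i ∈ Set.Iic k by simp; omega)
          (show j - 1 ∈ Set.Iic k by simp; omega) (by omega)
        omega
      · have := hp.antitoneOn (show j ∈ Set.Iic k by simpa using hj.2)
          (show i ∈ Set.Iic k by simpa using hi.2) hij
        omega
  simp only [hop, advance, Moves, hfree]

theorem positionsGE_oeRun {c : ℕ} {b : Fin n → ℕ} (hp0 : p 0 = n)
    (hp : StrictAntiOn p (Set.Iic k)) (hb : positionsGE n c b = (Icc 1 k).image p) (t : ℕ) :
    positionsGE n c (oeRun n t b) = (Icc 1 k).image (trajectory p t) := by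
  induction t with
  | zero => exact hb
  | succ t ih =>
    rw [oeRun, positionsGE_oeStep, ih, image_image]
    exact image_congr fun j hj => hop_eq_advance (trajectory_apply_zero p t ▸ hp0)
      (strictAntiOn_trajectory hp t) hj

end Particles

theorem exists_particles {n : ℕ} {S : Finset ℕ} (hS : ∀ x ∈ S, x < n) :
    ∃ p : ℕ → ℕ, p 0 = n ∧ StrictAntiOn p (Set.Iic #S) ∧ S = (Icc 1 #S).image p := by
  set k := #S
  let e := S.orderEmbOfFin rfl
  refine ⟨fun j => if h : 0 < j ∧ j ≤ k then e ⟨k - j, by omega⟩ else n, by simp, ?_, ?_⟩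
  · intro i hi j hj hij
    simp only [Set.mem_Iic] at hi hj
    have hjS := hS _ (S.orderEmbOfFin_mem rfl ⟨k - j, by omega⟩)
    rcases Nat.eq_zero_or_pos i with rfl | hi0
    · simpa [dif_pos (show 0 < j ∧ j ≤ k by omega)] using hjS
    · simp only [dif_pos (show 0 < j ∧ j ≤ k by omega), dif_pos (show 0 < i ∧ i ≤ k by omega)]
      exact e.strictMono (Fin.mk_lt_mk.2 (by omega))
  · ext x
    simp only [mem_image, mem_Icc]
    constructor
    · intro hx
      obtain ⟨i, rfl⟩ : x ∈ Set.range e := by rwa [range_orderEmbOfFin]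
      refine ⟨k - i, ⟨by omega, by omega⟩, ?_⟩
      rw [dif_pos (by omega)]
      congr 2
      omega
    · rintro ⟨j, hj, rfl⟩
      rw [dif_pos (by omega)]
      exact S.orderEmbOfFin_mem rfl _

theorem positionsGE_oeRun_self {n : ℕ} (c : ℕ) (b : Fin n → ℕ) :
    positionsGE n c (oeRun n n b) = Ico (n - #(positionsGE n c b)) n := by
  have hS : ∀ x ∈ positionsGE n c b, x < n := fun x hx => (mem_positionsGE.1 hx).1
  obtain ⟨p, hp0, hp, hb⟩ := exists_particles hS
  have hk : #(positionsGE n c b) ≤ n := by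
    simpa using card_le_card
      (show positionsGE n c b ⊆ range n from fun x hx => mem_range.2 (hS x hx))
  rw [positionsGE_oeRun hp0 hp hb,
    image_congr fun j hj => trajectory_self hp0 hp (mem_Icc.1 hj).2]
  ext x
  simp only [mem_image, mem_Icc, mem_Ico]
  constructor
  · rintro ⟨j, hj, rfl⟩
    omega
  · intro hx
    exact ⟨n - x, by omega, by omega⟩

theorem card_positionsGE {n : ℕ} (c : ℕ) (b : Fin n → ℕ) :
    #(positionsGE n c b) = #{v | c ≤ b v} := by
  simp [positionsGE]

theorem injective_of_card_filter_le_eq {ι : Type*} [Fintype ι] {f g : ι → ℕ}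
    (hf : Function.Injective f) (hfg : ∀ c, #{i | c ≤ g i} = #{i | c ≤ f i}) :
    Function.Injective g := by
  classical
  have hfiber : ∀ (h : ι → ℕ) c, #{i | h i = c} + #{i | c + 1 ≤ h i} = #{i | c ≤ h i} := by
    intro h c
    rw [← card_union_of_disjoint (disjoint_filter.2 fun i _ h1 h2 => by omega)]
    congr 1
    ext i
    simp only [mem_union, mem_filter, mem_univ, true_and]
    omega
  intro u v huv
  have hcard : #{i | g i = g u} ≤ 1 := by
    have hg := hfiber g (g u)
    have hf' := hfiber f (g u)
    have hc := hfg (g u)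
    have hc1 := hfg (g u + 1)
    have hf1 : #{i | f i = g u} ≤ 1 :=
      card_le_one.2 fun a ha b hb => hf (by simp only [mem_filter] at ha hb; rw [ha.2, hb.2])
    omega
  exact card_le_one.1 hcard u (by simp) v (by simp [huv])

theorem monotone_oeRun_self (n : ℕ) (b : Fin n → ℕ) : Monotone (oeRun n n b) := by
  intro v w hvw
  have hv : v.val ∈ positionsGE n (oeRun n n b v) (oeRun n n b) :=
    mem_positionsGE.2 ⟨v.isLt, le_rfl⟩
  have hw : w.val ∈ positionsGE n (oeRun n n b v) (oeRun n n b) := by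
    rw [positionsGE_oeRun_self, mem_Ico] at hv ⊢
    exact ⟨hv.1.trans hvw, w.isLt⟩
  exact (mem_positionsGE.1 hw).2

theorem injective_oeRun_self {n : ℕ} {f : Fin n → ℕ} (hf : Function.Injective f) :
    Function.Injective (oeRun n n f) := by
  refine injective_of_card_filter_le_eq hf fun c => ?_
  have hk : #(positionsGE n c f) ≤ n := by
    simpa [card_positionsGE] using card_filter_le (univ : Finset (Fin n)) (fun v => c ≤ f v)
  rw [← card_positionsGE, ← card_positionsGE, positionsGE_oeRun_self, Nat.card_Ico]
  omega

end OddEvenSort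

/-- after `n` rounds of odd-even transposition sort on the path
`P_n`, any arrangement of distinct keys is sorted: vertex `i` holds the key of
rank `i`. -/
theorem stmt1 (n : ℕ) (f : Fin n → ℕ) (hf : Function.Injective f) :
    StrictMono (oeRun n n f) :=
  (OddEvenSort.monotone_oeRun_self n f).strictMono_of_injective
    (OddEvenSort.injective_oeRun_self hf)
end

section
/- Let T be a tree with maximum degree Δ, let Γ be a contour of T (closed DFS walk crossing each edge twice), and fix a root r. Select, for each vertex x of T, one occurrence of x in Γ: the first occurrence if dist(r,x) is even, and the last occurrence if dist(r,x) is odd. Then any two consecutive selected positions along Γ are at distance at most 3 in Γ. -/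
/-- The selected occurrence (position in the support of the closed walk `w`) of
the vertex `x`: the first occurrence if `dist r x` is even, the last occurrence
if `dist r x` is odd. -/
noncomputable def sel {V : Type*} [DecidableEq V] (T : SimpleGraph V) (r : V) {a : V}
    (w : T.Walk a a) (x : V) : ℕ :=
  if Even (T.dist r x) then w.support.idxOf x
  else w.support.length - 1 - w.support.reverse.idxOf x

namespace StmtNineAux
open SimpleGraph List

variable {V : Type*} [DecidableEq V] {T : SimpleGraph V}

lemma s9_indexOf_eq_of {α : Type*} [DecidableEq α] {x : α} :
    ∀ {l : List α} {i : ℕ} (h : i < l.length), l[i] = x →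
      (∀ j (hj : j < i), l[j]'(lt_trans hj h) ≠ x) → l.idxOf x = i := by
  intro l
  induction l with
  | nil => intro i h; simp at h
  | cons a t ih =>
    intro i h hx hmin
    cases i with
    | zero => simpa using List.idxOf_cons_eq t (by simpa using hx)
    | succ n =>
      have ha : a ≠ x := by
        have := hmin 0 (Nat.succ_pos n); simpa using this
      rw [List.idxOf_cons_ne _ ha]
      have : t.idxOf x = n := by
        refine ih (by simpa using h) (by simpa using hx) ?_
        intro j hj
        have := hmin (j+1) (Nat.succ_lt_succ hj)
        simpa using this
      omega

lemma s9_support_getElem {a b : V} (p : T.Walk a b) :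
    ∀ (i : ℕ) (h : i < p.support.length), p.support[i] = p.getVert i := by
  induction p with
  | nil => intro i h; simp at h; simp [h]
  | cons hadj q ih =>
    intro i h
    cases i with
    | zero => simp
    | succ n =>
      simp only [SimpleGraph.Walk.support_cons, List.getElem_cons_succ,
        SimpleGraph.Walk.getVert_cons_succ]
      exact ih n (by simpa [SimpleGraph.Walk.support_cons] using h)

lemma s9_edges_getElem {a b : V} (p : T.Walk a b) :
    ∀ (i : ℕ) (h : i < p.edges.length), p.edges[i] = s(p.getVert i, p.getVert (i+1)) := by
  induction p with
  | nil => intro i h; simp at h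
  | cons hadj q ih =>
    intro i h
    cases i with
    | zero => simp
    | succ n =>
      simp only [SimpleGraph.Walk.edges_cons, List.getElem_cons_succ,
        SimpleGraph.Walk.getVert_cons_succ]
      exact ih n (by simpa using h)

/-- The walk consisting of the first `n` darts of `p`. -/
def takeW {a b : V} : (p : T.Walk a b) → (n : ℕ) → T.Walk a (p.getVert n)
  | p, 0 => (Walk.nil.copy rfl rfl).copy rfl (p.getVert_zero).symm
  | Walk.nil, (_+1) => Walk.nil
  | Walk.cons h q, (n+1) => Walk.cons h (takeW q n)

lemma s9_edges_takeW {a b : V} :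
    ∀ (p : T.Walk a b) (n : ℕ), (takeW p n).edges = p.edges.take n := by
  intro p
  induction p with
  | nil => intro n; cases n <;> simp [takeW]
  | cons hadj q ih =>
    intro n
    cases n with
    | zero => simp [takeW]
    | succ m => simp [takeW, ih m]

lemma s9_edges_drop {a b : V} (p : T.Walk a b) :
    ∀ (n : ℕ), (p.drop n).edges = p.edges.drop n := by
  induction p with
  | nil => intro n; cases n <;> simp [SimpleGraph.Walk.drop]
  | cons hadj q ih =>
    intro n
    cases n with
    | zero => simp [SimpleGraph.Walk.drop]
    | succ m => simp [SimpleGraph.Walk.drop, ih m]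

lemma s9_getVert_drop {a b : V} (p : T.Walk a b) :
    ∀ (n m : ℕ), (p.drop n).getVert m = p.getVert (n + m) := by
  induction p with
  | nil => intro n m; cases n <;> simp [SimpleGraph.Walk.drop, SimpleGraph.Walk.getVert]
  | cons hadj q ih =>
    intro n m
    cases n with
    | zero => simp [SimpleGraph.Walk.drop]
    | succ k =>
      simp only [SimpleGraph.Walk.drop, SimpleGraph.Walk.getVert_copy,
        SimpleGraph.Walk.getVert_cons_succ, Nat.succ_add]
      exact ih k m

lemma s9_cross_first (hT : T.IsAcyclic) {a b : V} (p : T.Walk a b) {i j : ℕ}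
    (hi : i < p.length) (hj : j ≤ i) (hv : p.getVert j = p.getVert (i+1)) :
    s(p.getVert i, p.getVert (i+1)) ∈ p.edges.take i := by
  have hadj := p.adj_getVert_succ hi
  have hbr := (isAcyclic_iff_forall_adj_isBridge.mp hT) hadj.symm
  rw [isBridge_iff_adj_and_forall_walk_mem_edges] at hbr
  have hend : (p.drop j).getVert (i - j) = p.getVert i := by
    rw [s9_getVert_drop]; congr 1; omega
  have hq := hbr (((takeW (p.drop j) (i - j)).copy hv hend))
  rw [Walk.edges_copy, s9_edges_takeW, s9_edges_drop] at hq
  have hmem : s(p.getVert i, p.getVert (i+1)) ∈ (p.edges.drop j).take (i - j) := by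
    rwa [Sym2.eq_swap] at hq
  have hsplit : p.edges.take i = p.edges.take j ++ (p.edges.drop j).take (i - j) := by
    rw [← List.take_add]; congr 1; omega
  rw [hsplit]
  exact List.mem_append_right _ hmem

lemma s9_cross_last (hT : T.IsAcyclic) {a b : V} (p : T.Walk a b) {i j : ℕ}
    (hi : i < p.length) (hj : i + 1 ≤ j) (hv : p.getVert j = p.getVert i) :
    s(p.getVert i, p.getVert (i+1)) ∈ p.edges.drop (i+1) := by
  have hadj := p.adj_getVert_succ hi
  have hbr := (isAcyclic_iff_forall_adj_isBridge.mp hT) hadj.symm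
  rw [isBridge_iff_adj_and_forall_walk_mem_edges] at hbr
  have hend : (p.drop (i+1)).getVert (j - (i+1)) = p.getVert i := by
    rw [s9_getVert_drop, show i + 1 + (j - (i+1)) = j by omega]; exact hv
  have hq := hbr (((takeW (p.drop (i+1)) (j - (i+1))).copy rfl hend))
  rw [Walk.edges_copy, s9_edges_takeW, s9_edges_drop] at hq
  have := List.take_subset (j - (i+1)) (p.edges.drop (i+1)) hq
  rwa [Sym2.eq_swap] at this

/-- Every step of a walk crossing each edge at most twice is either a first
arrival at its head or a final departure from its tail. -/
lemma s9_step (hT : T.IsAcyclic) {a b : V} (p : T.Walk a b)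
    (hedges : ∀ e ∈ T.edgeSet, p.edges.count e = 2) {i : ℕ} (hi : i < p.length) :
    (∀ j ≤ i, p.getVert j ≠ p.getVert (i+1)) ∨
    (∀ j, i+1 ≤ j → j ≤ p.length → p.getVert j ≠ p.getVert i) := by
  have hadj := p.adj_getVert_succ hi
  set e := s(p.getVert i, p.getVert (i+1)) with he
  have hie : i < p.edges.length := by rwa [SimpleGraph.Walk.length_edges]
  have hgete : p.edges[i] = e := s9_edges_getElem p i hie
  have hcount : p.edges.count e = 2 := hedges e hadj
  have hsum : (p.edges.take i).count e + (p.edges.drop i).count e = 2 := by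
    rw [← List.count_append, List.take_append_drop]; exact hcount
  have hdropcons : p.edges.drop i = e :: p.edges.drop (i+1) := by
    rw [List.drop_eq_getElem_cons hie, hgete]
  rw [hdropcons, List.count_cons_self] at hsum
  have hcases : (p.edges.take i).count e = 0 ∨ (p.edges.drop (i+1)).count e = 0 := by omega
  rcases hcases with h0 | h0
  · left
    intro j hj hvv
    have := s9_cross_first hT p hi hj hvv
    rw [← he] at this
    exact absurd h0 (by simpa using List.count_pos_iff.mpr this |>.ne')
  · right
    intro j hj1 hj2 hvv
    have := s9_cross_last hT p hi hj1 hvv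
    rw [← he] at this
    exact absurd h0 (by simpa using List.count_pos_iff.mpr this |>.ne')

lemma s9_path_length_eq_dist (hT : T.IsTree) {a b : V} (p : T.Walk a b) (hp : p.IsPath) :
    p.length = T.dist a b := by
  obtain ⟨q, hq⟩ := hT.isConnected.exists_walk_length_eq_dist a b
  have hbp := q.bypass_isPath
  have heq : p = q.bypass := ((hT.existsUnique_path a b).unique hp hbp)
  have h1 : p.length ≤ q.length := heq ▸ q.length_bypass_le
  have h2 := SimpleGraph.dist_le p
  omega

lemma s9_adj_dist (hT : T.IsTree) (r : V) {u v : V} (h : T.Adj u v) :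
    T.dist r v = T.dist r u + 1 ∨ T.dist r u = T.dist r v + 1 := by
  obtain ⟨P, hP, -⟩ := hT.existsUnique_path r u
  by_cases hv : v ∈ P.support
  · right
    have ht : (P.takeUntil v hv).IsPath := hP.takeUntil hv
    have hd : (P.dropUntil v hv).IsPath := hP.dropUntil hv
    have hlen : (P.takeUntil v hv).length + (P.dropUntil v hv).length = P.length := by
      rw [← Walk.length_append, Walk.take_spec]
    have hone : (P.dropUntil v hv) = Walk.cons h.symm Walk.nil := by
      refine (hT.existsUnique_path v u).unique hd ?_
      rw [Walk.cons_isPath_iff]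
      exact ⟨Walk.IsPath.nil, by simp [h.ne']⟩
    have h1 := s9_path_length_eq_dist hT P hP
    have h2 := s9_path_length_eq_dist hT _ ht
    rw [hone] at hlen
    simp only [Walk.length_cons, Walk.length_nil] at hlen
    omega
  · left
    have hcp : (Walk.cons h.symm P.reverse).IsPath := by
      rw [Walk.cons_isPath_iff]
      exact ⟨hP.reverse, by simpa using hv⟩
    have h1 := s9_path_length_eq_dist hT P hP
    have h2 := s9_path_length_eq_dist hT _ hcp.reverse
    simp only [Walk.length_reverse, Walk.length_cons] at h2
    omega

lemma s9_parity (hT : T.IsTree) {r : V} (w : T.Walk r r) :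
    ∀ i, i ≤ w.length → T.dist r (w.getVert i) % 2 = i % 2 := by
  intro i
  induction i with
  | zero => intro _; simp [SimpleGraph.dist_self]
  | succ n ih =>
    intro hn
    have hadj := w.adj_getVert_succ (show n < w.length by omega)
    have hord := s9_adj_dist hT r hadj
    have hprev := ih (by omega)
    rcases hord with h | h <;> omega

lemma s9_mem_support [Fintype V] [DecidableRel T.Adj]
    (hT : T.IsTree) {r : V} (w : T.Walk r r)
    (hvisits : ∀ v : V, w.support.tail.count v = T.degree v) (v : V) : v ∈ w.support := by
  by_cases hv : v = r
  · subst hv; exact w.start_mem_support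
  · obtain ⟨q⟩ : T.Reachable v r := hT.isConnected v r
    cases q with
    | nil => exact absurd rfl hv
    | cons hadj q' =>
      have hdeg : 0 < T.degree v := by
        rw [SimpleGraph.degree_pos_iff_exists_adj]
        exact ⟨_, hadj⟩
      have hc : 0 < w.support.tail.count v := by rw [hvisits]; exact hdeg
      exact List.mem_of_mem_tail (List.count_pos_iff.mp hc)

lemma s9_sel_eq_of_first (hT : T.IsTree) {r : V} (w : T.Walk r r) {i : ℕ}
    (hi : i ≤ w.length) (hpar : i % 2 = 0)
    (hfirst : ∀ j < i, w.getVert j ≠ w.getVert i) :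
    sel T r w (w.getVert i) = i := by
  have heven : Even (T.dist r (w.getVert i)) := by
    rw [Nat.even_iff, s9_parity hT w i hi]; exact hpar
  rw [sel, if_pos heven]
  refine s9_indexOf_eq_of (l := w.support) (i := i) ?_ ?_ ?_
  · rw [Walk.length_support]; omega
  · exact s9_support_getElem w i _
  · intro j hj hx
    rw [s9_support_getElem] at hx
    exact hfirst j hj (hx.trans (s9_support_getElem w i (by rw [Walk.length_support]; omega)).symm ▸ hx)

lemma s9_sel_eq_of_last (hT : T.IsTree) {r : V} (w : T.Walk r r) {i : ℕ}
    (hi : i ≤ w.length) (hpar : i % 2 = 1)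
    (hlast : ∀ j, i < j → j ≤ w.length → w.getVert j ≠ w.getVert i) :
    sel T r w (w.getVert i) = i := by
  have hodd : ¬ Even (T.dist r (w.getVert i)) := by
    rw [Nat.even_iff, s9_parity hT w i hi]; omega
  rw [sel, if_neg hodd]
  have hL : w.support.length = w.length + 1 := Walk.length_support w
  have hrev : w.support.reverse.idxOf (w.getVert i) = w.length - i := by
    refine s9_indexOf_eq_of ?_ ?_ ?_
    · rw [List.length_reverse, hL]; omega
    · rw [List.getElem_reverse, s9_support_getElem]
      congr 1
      omega
    · intro j hj hx
      rw [List.getElem_reverse, s9_support_getElem] at hx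
      rw [hL, show w.length + 1 - 1 - j = w.length - j from by omega] at hx
      exact hlast (w.length - j) (by omega) (by omega) hx
  rw [hrev, hL]
  omega

lemma s9_sel_lt (hT : T.IsTree) {r : V} (w : T.Walk r r) {x : V}
    (hx : x ∈ w.support) : sel T r w x < w.support.length := by
  have hL : 0 < w.support.length := by rw [Walk.length_support]; omega
  rw [sel]
  split
  · exact List.idxOf_lt_length_iff.mpr hx
  · omega

end StmtNineAux

open StmtNineAux in
/-- let `T` be a tree with maximum degree `Δ`, `Γ` a contour of `T`
(closed DFS walk crossing each edge twice) and `r` a root.  Selecting for each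
vertex its first occurrence in `Γ` if its distance to `r` is even and its last
occurrence otherwise, any two consecutive selected positions along `Γ` are at
distance at most `3`. -/
theorem stmt9 {V : Type*} [Fintype V] [DecidableEq V] (T : SimpleGraph V)
    [DecidableRel T.Adj] (hT : T.IsTree) (Δ : ℕ) (hΔ : T.maxDegree = Δ)
    (r : V) (w : T.Walk r r)
    (hlen : w.support.length = 2 * Fintype.card V - 1)
    (hedges : ∀ e ∈ T.edgeSet, w.edges.count e = 2)
    (hvisits : ∀ v : V, w.support.tail.count v = T.degree v) :
    ∀ x y : V, sel T r w x < sel T r w y →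
      (∃ z : V, sel T r w x < sel T r w z ∧ sel T r w z < sel T r w y) ∨
      sel T r w y - sel T r w x ≤ 3 := by
  intro x y hxy
  by_cases hle : sel T r w y - sel T r w x ≤ 3
  · right; exact hle
  left
  have hy : y ∈ w.support := s9_mem_support hT w hvisits y
  have hqlt : sel T r w y < w.support.length := s9_sel_lt hT w hy
  have hL : w.support.length = w.length + 1 := SimpleGraph.Walk.length_support w
  obtain ⟨i, hodd, hip, hiq⟩ :
      ∃ i, i % 2 = 1 ∧ sel T r w x < i ∧ i + 1 < sel T r w y := by
    rcases Nat.mod_two_eq_zero_or_one (sel T r w x) with h | h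
    · exact ⟨sel T r w x + 1, by omega, by omega, by omega⟩
    · exact ⟨sel T r w x + 2, by omega, by omega, by omega⟩
  have hilen : i < w.length := by omega
  rcases s9_step hT.IsAcyclic w hedges hilen with hfirst | hlast
  · refine ⟨w.getVert (i+1), ?_, ?_⟩
    · rw [s9_sel_eq_of_first hT w (by omega) (by omega) (fun j hj => hfirst j (by omega))]
      omega
    · rw [s9_sel_eq_of_first hT w (by omega) (by omega) (fun j hj => hfirst j (by omega))]
      omega
  · refine ⟨w.getVert i, ?_, ?_⟩
    · rw [s9_sel_eq_of_last hT w (by omega) hodd hlast]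
      omega
    · rw [s9_sel_eq_of_last hT w (by omega) hodd hlast]
      omega
end

section
/- Let G be an n-vertex graph with routing number rt(G) and maximum matching of size ν(G), and suppose there exists a sorting network on the complete graph K_n of depth D (e.g., D = O(log n) by AKS). Then st(G) ≤ D · ⌈n/ν(G)⌉ · (rt(G) + 1); in particular st(G) = O(n log n · rt(G)/ν(G)). -/
open Finset

variable {V : Type*}

/-- A stage of a sorting network on a graph `G`: a finite set of vertex-disjoint
edges of `G`, each either directed (compare-exchange) or undirected (swap). -/
structure Stage {V : Type*} (G : SimpleGraph V) where
  pairs : Finset (V × V)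
  adj : ∀ p ∈ pairs, G.Adj p.1 p.2
  directed : V × V → Bool
  disj : ∀ p ∈ pairs, ∀ q ∈ pairs, p ≠ q →
    p.1 ≠ q.1 ∧ p.1 ≠ q.2 ∧ p.2 ≠ q.1 ∧ p.2 ≠ q.2

open scoped Classical in
/-- Apply a stage to a configuration of keys `f : V → ℕ`.  For a directed pair
`(u,v)` the smaller key goes to `u` and the larger to `v`; an undirected pair
unconditionally swaps its keys. -/
noncomputable def Stage.apply {G : SimpleGraph V} (s : Stage G) (f : V → ℕ) (v : V) : ℕ :=
  if h1 : ∃ p, p ∈ s.pairs ∧ p.1 = v then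
    (if s.directed h1.choose then min (f h1.choose.1) (f h1.choose.2) else f h1.choose.2)
  else if h2 : ∃ p, p ∈ s.pairs ∧ p.2 = v then
    (if s.directed h2.choose then max (f h2.choose.1) (f h2.choose.2) else f h2.choose.1)
  else f v

noncomputable def runNetwork {G : SimpleGraph V} (L : List (Stage G)) (f : V → ℕ) : V → ℕ :=
  L.foldl (fun g s => s.apply g) f

/-- `L` is a sorting network on `(G, π)`: for every injective assignment of keys,
after running all stages, the key at a vertex of smaller `π`-rank is smaller. -/
def IsSortingNetwork {n : ℕ} (G : SimpleGraph V) (π : V ≃ Fin n) (L : List (Stage G)) : Prop :=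
  ∀ f : V → ℕ, Function.Injective f →
    ∀ u w : V, π u < π w → runNetwork L f u < runNetwork L f w

/-- Minimal depth of a sorting network on `(G, π)`. -/
noncomputable def stP {n : ℕ} (G : SimpleGraph V) (π : V ≃ Fin n) : ℕ :=
  sInf {t | ∃ L : List (Stage G), L.length = t ∧ IsSortingNetwork G π L}

/-- The sorting number of `G` : the minimum over sorted orders `π` of the
minimal depth of a sorting network on `(G, π)`. -/
noncomputable def st [Fintype V] (G : SimpleGraph V) : ℕ :=
  sInf {t | ∃ π : V ≃ Fin (Fintype.card V), ∃ L : List (Stage G),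
    L.length = t ∧ IsSortingNetwork G π L}

/-- A matching step: an involution of the vertices moving pebbles only along edges. -/
def IsMatchingStep (G : SimpleGraph V) (σ : Equiv.Perm V) : Prop :=
  (∀ v, σ (σ v) = v) ∧ ∀ v, σ v ≠ v → G.Adj v (σ v)

/-- Position of a pebble starting at `v` after applying the matching steps in `L`. -/
def finalPos (L : List (Equiv.Perm V)) (v : V) : V :=
  L.foldl (fun p σ => σ p) v

/-- `t` matching steps of `G` suffice to route every pebble from `v` to `σ v`. -/
def RoutesIn (G : SimpleGraph V) (σ : Equiv.Perm V) (t : ℕ) : Prop :=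
  ∃ L : List (Equiv.Perm V), L.length = t ∧ (∀ τ ∈ L, IsMatchingStep G τ) ∧
    ∀ v, finalPos L v = σ v

/-- Routing time of the permutation `σ` on `G`. -/
noncomputable def rtP (G : SimpleGraph V) (σ : Equiv.Perm V) : ℕ :=
  sInf {t | RoutesIn G σ t}

/-- The routing number of `G`. -/
noncomputable def rt [Fintype V] [DecidableEq V] (G : SimpleGraph V) : ℕ :=
  Finset.univ.sup fun σ : Equiv.Perm V => rtP G σ

/-- `M` is a set of edges of `G` forming a matching (pairwise disjoint edges). -/
def IsMatchingSet (G : SimpleGraph V) (M : Finset (Sym2 V)) : Prop :=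
  (↑M : Set (Sym2 V)) ⊆ G.edgeSet ∧
    (↑M : Set (Sym2 V)).Pairwise fun e f => ∀ v, ¬(v ∈ e ∧ v ∈ f)

/-- `ν(G)`: the maximum size of a matching in `G`. -/
noncomputable def nu (G : SimpleGraph V) : ℕ :=
  sSup {k | ∃ M : Finset (Sym2 V), IsMatchingSet G M ∧ M.card = k}

/-!
A stage of a sorting network on `K_n` has at most `n ≤ ⌈n/ν⌉ ν` comparators, so it splits into
`⌈n/ν⌉` stages of at most `ν` comparators each. Such a small stage is run on `G` by routing, in
`rt G` stages of swaps, the keys it compares onto the endpoints of a maximum matching of `G`, and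
then comparing along that matching. The keys are never moved back: the network only remembers the
current relabelling of the vertices, and the final relabelling is absorbed into the sorted order.
-/

namespace Stage

variable {H G : SimpleGraph V} (s : Stage H) (f : V → ℕ)

theorem eq_of_mem_of_mem {p q : V × V} (hp : p ∈ s.pairs) (hq : q ∈ s.pairs) {v : V}
    (hvp : v = p.1 ∨ v = p.2) (hvq : v = q.1 ∨ v = q.2) : p = q := by
  by_contra hne
  obtain ⟨h11, h12, h21, h22⟩ := s.disj p hp q hq hne
  rcases hvp with rfl | rfl <;> rcases hvq with h | h
  exacts [h11 h, h12 h, h21 h, h22 h]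

theorem apply_fst {a b : V} (h : (a, b) ∈ s.pairs) :
    s.apply f a = if s.directed (a, b) then min (f a) (f b) else f b := by
  have hex : ∃ p, p ∈ s.pairs ∧ p.1 = a := ⟨_, h, rfl⟩
  have hchoose : hex.choose = (a, b) :=
    s.eq_of_mem_of_mem hex.choose_spec.1 h (Or.inl hex.choose_spec.2.symm) (Or.inl rfl)
  rw [Stage.apply, dif_pos hex, hchoose]

theorem apply_snd {a b : V} (h : (a, b) ∈ s.pairs) :
    s.apply f b = if s.directed (a, b) then max (f a) (f b) else f a := by
  have hfst : ¬∃ p, p ∈ s.pairs ∧ p.1 = b := fun ⟨p, hp, hpb⟩ =>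
    (s.adj _ h).ne (congrArg Prod.fst (s.eq_of_mem_of_mem hp h (Or.inl hpb.symm) (Or.inr rfl))
      |>.symm.trans hpb)
  have hex : ∃ p, p ∈ s.pairs ∧ p.2 = b := ⟨_, h, rfl⟩
  have hchoose : hex.choose = (a, b) :=
    s.eq_of_mem_of_mem hex.choose_spec.1 h (Or.inr hex.choose_spec.2.symm) (Or.inr rfl)
  rw [Stage.apply, dif_neg hfst, dif_pos hex, hchoose]

theorem apply_of_forall_not_mem {v : V} (hv : ∀ p ∈ s.pairs, ¬(v = p.1 ∨ v = p.2)) :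
    s.apply f v = f v := by
  have hfst : ¬∃ p, p ∈ s.pairs ∧ p.1 = v := fun ⟨p, hp, h⟩ => hv p hp (Or.inl h.symm)
  have hsnd : ¬∃ p, p ∈ s.pairs ∧ p.2 = v := fun ⟨p, hp, h⟩ => hv p hp (Or.inr h.symm)
  rw [Stage.apply, dif_neg hfst, dif_neg hsnd]

theorem apply_congr {g : V → ℕ} {p : V × V} (hp : p ∈ s.pairs) (h₁ : g p.1 = f p.1)
    (h₂ : g p.2 = f p.2) {v : V} (hv : v = p.1 ∨ v = p.2) : s.apply g v = s.apply f v := by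
  rcases hv with rfl | rfl
  · rw [apply_fst s g hp, apply_fst s f hp, h₁, h₂]
  · rw [apply_snd s g hp, apply_snd s f hp, h₁, h₂]

def restrict (B : Finset (V × V)) (hB : B ⊆ s.pairs) : Stage H where
  pairs := B
  adj p hp := s.adj p (hB hp)
  directed := s.directed
  disj p hp q hq hne := s.disj p (hB hp) q (hB hq) hne

variable {B : Finset (V × V)} (hB : B ⊆ s.pairs)

theorem restrict_apply_of_mem {p : V × V} (hp : p ∈ B) {v : V} (hv : v = p.1 ∨ v = p.2) :
    (s.restrict B hB).apply f v = s.apply f v := by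
  rcases hv with rfl | rfl
  · exact ((s.restrict B hB).apply_fst f hp).trans (s.apply_fst f (hB hp)).symm
  · exact ((s.restrict B hB).apply_snd f hp).trans (s.apply_snd f (hB hp)).symm

theorem restrict_apply_of_not_mem {p : V × V} (hp : p ∈ s.pairs) (hpB : p ∉ B) {v : V}
    (hv : v = p.1 ∨ v = p.2) : (s.restrict B hB).apply f v = f v :=
  apply_of_forall_not_mem _ _ fun _ hq hvq => hpB (s.eq_of_mem_of_mem (hB hq) hp hvq hv ▸ hq)

theorem restrict_sdiff_apply_restrict_apply [DecidableEq V] :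
    (s.restrict (s.pairs \ B) sdiff_subset).apply ((s.restrict B hB).apply f) = s.apply f := by
  funext v
  by_cases hv : ∃ p ∈ s.pairs, v = p.1 ∨ v = p.2
  · obtain ⟨p, hp, hvp⟩ := hv
    by_cases hpB : p ∈ B
    · rw [restrict_apply_of_not_mem _ _ _ hp (fun h => (mem_sdiff.1 h).2 hpB) hvp,
        restrict_apply_of_mem _ _ _ hpB hvp]
    · rw [restrict_apply_of_mem _ _ _ (mem_sdiff.2 ⟨hp, hpB⟩) hvp]
      exact s.apply_congr f hp (s.restrict_apply_of_not_mem f hB hp hpB (Or.inl rfl))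
        (s.restrict_apply_of_not_mem f hB hp hpB (Or.inr rfl)) hvp
  · simp only [not_exists, not_and] at hv
    rw [apply_of_forall_not_mem _ _ fun p hp => hv p (sdiff_subset hp),
      apply_of_forall_not_mem _ _ fun p hp => hv p (hB hp), apply_of_forall_not_mem _ _ hv]

def relabel (π : Equiv.Perm V) (h : ∀ p ∈ s.pairs, G.Adj (π p.1) (π p.2)) : Stage G where
  pairs := s.pairs.map (π.toEmbedding.prodMap π.toEmbedding)
  adj := by
    simp only [mem_map]
    rintro _ ⟨p, hp, rfl⟩
    exact h p hp
  directed q := s.directed (π.symm q.1, π.symm q.2)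
  disj := by
    simp only [mem_map]
    rintro _ ⟨p, hp, rfl⟩ _ ⟨q, hq, rfl⟩ hne
    simpa using s.disj p hp q hq (by rintro rfl; exact hne rfl)

theorem relabel_apply (π : Equiv.Perm V) (h : ∀ p ∈ s.pairs, G.Adj (π p.1) (π p.2)) :
    (s.relabel π h).apply (f ∘ π.symm) = s.apply f ∘ π.symm := by
  funext w
  obtain ⟨v, rfl⟩ := π.surjective w
  simp only [Function.comp_apply, Equiv.symm_apply_apply]
  by_cases hv : ∃ p ∈ s.pairs, v = p.1 ∨ v = p.2
  · obtain ⟨p, hp, hvp⟩ := hv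
    have hp' : (π p.1, π p.2) ∈ (s.relabel π h).pairs := mem_map_of_mem _ hp
    rcases hvp with rfl | rfl
    · rw [apply_fst _ _ hp', apply_fst _ _ hp]
      simp [relabel]
    · rw [apply_snd _ _ hp', apply_snd _ _ hp]
      simp [relabel]
  · simp only [not_exists, not_and] at hv
    rw [apply_of_forall_not_mem _ _ hv, apply_of_forall_not_mem]
    · simp
    · simp only [relabel, mem_map]
      rintro _ ⟨p, hp, rfl⟩
      simpa using hv p hp

end Stage

theorem runNetwork_cons {H : SimpleGraph V} (s : Stage H) (L : List (Stage H)) (f : V → ℕ) :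
    runNetwork (s :: L) f = runNetwork L (s.apply f) := rfl

theorem runNetwork_append {H : SimpleGraph V} (L₁ L₂ : List (Stage H)) (f : V → ℕ) :
    runNetwork (L₁ ++ L₂) f = runNetwork L₂ (runNetwork L₁ f) :=
  List.foldl_append ..

theorem Stage.exists_split [DecidableEq V] {H : SimpleGraph V} {ν : ℕ} :
    ∀ {k : ℕ} (s : Stage H), s.pairs.card ≤ k * ν →
      ∃ L : List (Stage H), L.length = k ∧ (∀ t ∈ L, t.pairs.card ≤ ν) ∧
        ∀ f, runNetwork L f = runNetwork [s] f
  | 0, s, hs => by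
    refine ⟨[], rfl, by simp, fun f => funext fun v => ?_⟩
    have hempty : s.pairs = ∅ := card_eq_zero.1 (Nat.le_zero.1 (by simpa using hs))
    exact (s.apply_of_forall_not_mem f (by simp [hempty])).symm
  | k + 1, s, hs => by
    obtain ⟨B, hB, hBcard⟩ := exists_subset_card_eq (min_le_right ν s.pairs.card)
    have hrest : (s.pairs \ B).card ≤ k * ν := by
      rw [card_sdiff_of_subset hB, hBcard]
      rw [Nat.add_one_mul] at hs
      omega
    obtain ⟨L, hlen, hcard, hrun⟩ := exists_split (s.restrict _ sdiff_subset) hrest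
    refine ⟨s.restrict B hB :: L, by simp [hlen], ?_, fun f => ?_⟩
    · rintro t (_ | ⟨_, ht⟩)
      · exact hBcard ▸ min_le_left _ _
      · exact hcard t ht
    · rw [runNetwork_cons, hrun]
      exact s.restrict_sdiff_apply_restrict_apply f hB

section Routing

variable [Fintype V] [DecidableEq V] {G : SimpleGraph V}

-- Each transposition of `τ` is listed once, oriented by an enumeration of `V`.
noncomputable def swapStage (τ : Equiv.Perm V) (hτ : IsMatchingStep G τ) : Stage G where
  pairs := univ.filter fun p => Fintype.equivFin V p.1 < Fintype.equivFin V p.2 ∧ τ p.1 = p.2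
  adj := by
    rintro ⟨a, _⟩ hp
    obtain ⟨hlt, rfl⟩ : _ ∧ τ a = _ := by simpa using hp
    exact hτ.2 a fun h => hlt.ne (by rw [h])
  directed _ := false
  disj := by
    rintro ⟨a, _⟩ hp ⟨c, _⟩ hq hne
    obtain ⟨ha, rfl⟩ : _ ∧ τ a = _ := by simpa using hp
    obtain ⟨hc, rfl⟩ : _ ∧ τ c = _ := by simpa using hq
    have hac : a ≠ c := by rintro rfl; exact hne rfl
    have haτc : a ≠ τ c := by
      rintro rfl
      rw [hτ.1] at ha
      exact (ha.trans hc).false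
    exact ⟨hac, haτc, fun h => haτc (by dsimp only at h; rw [← h, hτ.1]),
      fun h => hac (τ.injective h)⟩

theorem swapStage_apply (τ : Equiv.Perm V) (hτ : IsMatchingStep G τ) (f : V → ℕ) (v : V) :
    (swapStage τ hτ).apply f v = f (τ v) := by
  set e := Fintype.equivFin V
  have hmem : ∀ {a b}, (a, b) ∈ (swapStage τ hτ).pairs ↔ e a < e b ∧ τ a = b := by
    simp [swapStage, e]
  rcases lt_trichotomy (e v) (e (τ v)) with hlt | heq | hgt
  · rw [Stage.apply_fst _ f (hmem.2 ⟨hlt, rfl⟩)]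
    rfl
  · have hfix : τ v = v := e.injective heq.symm
    rw [Stage.apply_of_forall_not_mem, hfix]
    rintro ⟨a, b⟩ hab hv
    obtain ⟨hlt, rfl⟩ := hmem.1 hab
    have hfixa : τ a = a := by
      rcases hv with h | h <;> dsimp only at h <;> subst h
      · exact hfix
      · exact hfix.symm.trans (hτ.1 a)
    rw [hfixa] at hlt
    exact hlt.false
  · rw [Stage.apply_snd _ f (hmem.2 ⟨hgt, hτ.1 v⟩)]
    rfl

theorem exists_network_finalPos :
    ∀ L : List (Equiv.Perm V), (∀ τ ∈ L, IsMatchingStep G τ) →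
      ∃ L' : List (Stage G), L'.length = L.length ∧
        ∀ f v, runNetwork L' f (finalPos L v) = f v
  | [], _ => ⟨[], rfl, fun _ _ => rfl⟩
  | τ :: L, hL => by
    have hτ := hL τ List.mem_cons_self
    obtain ⟨L', hlen, hrun⟩ :=
      exists_network_finalPos L fun σ hσ => hL σ (List.mem_cons_of_mem _ hσ)
    refine ⟨swapStage τ hτ :: L', by simp [hlen], fun f v => ?_⟩
    change runNetwork L' ((swapStage τ hτ).apply f) (finalPos L (τ v)) = f v
    rw [hrun, swapStage_apply, hτ.1]

theorem RoutesIn.exists_network {σ : Equiv.Perm V} {t : ℕ} (h : RoutesIn G σ t) :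
    ∃ L : List (Stage G), L.length = t ∧ ∀ f, runNetwork L f = f ∘ σ.symm := by
  obtain ⟨L, rfl, hsteps, hpos⟩ := h
  obtain ⟨L', hlen, hrun⟩ := exists_network_finalPos L hsteps
  refine ⟨L', hlen, fun f => funext fun w => ?_⟩
  simpa [hpos] using hrun f (σ.symm w)

end Routing

section Routable

variable {G : SimpleGraph V}

theorem finalPos_append (L₁ L₂ : List (Equiv.Perm V)) (v : V) :
    finalPos (L₁ ++ L₂) v = finalPos L₂ (finalPos L₁ v) :=
  List.foldl_append ..

theorem routesIn_one (k : ℕ) : RoutesIn G 1 k :=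
  ⟨List.replicate k 1, List.length_replicate, fun _ hτ => List.eq_of_mem_replicate hτ ▸
    ⟨fun _ => rfl, fun _ h => absurd rfl h⟩,
    fun v => by induction k <;> simp_all [finalPos, List.replicate_succ]⟩

theorem RoutesIn.mul {σ τ : Equiv.Perm V} {s t : ℕ} (hσ : RoutesIn G σ s) (hτ : RoutesIn G τ t) :
    RoutesIn G (τ * σ) (s + t) := by
  obtain ⟨L₁, rfl, hm₁, hf₁⟩ := hσ
  obtain ⟨L₂, rfl, hm₂, hf₂⟩ := hτ
  refine ⟨L₁ ++ L₂, List.length_append, fun τ hτ => ?_, fun v => ?_⟩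
  · exact (List.mem_append.1 hτ).elim (hm₁ τ) (hm₂ τ)
  · rw [finalPos_append, hf₁, hf₂]
    rfl

theorem RoutesIn.mono {σ : Equiv.Perm V} {s t : ℕ} (h : RoutesIn G σ s) (hst : s ≤ t) :
    RoutesIn G σ t := by
  simpa [Nat.add_sub_cancel' hst] using h.mul (routesIn_one (t - s))

theorem routesIn_swap_of_adj [DecidableEq V] {u w : V} (h : G.Adj u w) :
    RoutesIn G (Equiv.swap u w) 1 := by
  refine ⟨[Equiv.swap u w], rfl, ?_, fun v => rfl⟩
  rintro _ (_ | ⟨_, ⟨⟩⟩)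
  refine ⟨Equiv.swap_apply_self u w, fun v hv => ?_⟩
  rcases Equiv.swap_apply_ne_self_iff.1 hv with ⟨-, rfl | rfl⟩
  · simpa using h
  · simpa using h.symm

variable (G) in
def routable : Submonoid (Equiv.Perm V) where
  carrier := {σ | ∃ t, RoutesIn G σ t}
  one_mem' := ⟨0, routesIn_one 0⟩
  mul_mem' := fun ⟨_, hσ⟩ ⟨_, hτ⟩ => ⟨_, hτ.mul hσ⟩

theorem swap_mem_routable [DecidableEq V] {u w : V} (h : G.Reachable u w) :
    Equiv.swap u w ∈ routable G := by
  obtain ⟨p⟩ := h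
  induction p with
  | nil => rw [Equiv.swap_self]; exact one_mem _
  | cons hadj _ ih => exact SubmonoidClass.swap_mem_trans _ ⟨1, routesIn_swap_of_adj hadj⟩ ih

theorem routesIn_rt [Fintype V] [DecidableEq V] (hG : G.Connected) (σ : Equiv.Perm V) :
    RoutesIn G σ (rt G) := by
  have hσ : σ ∈ routable G := by
    induction σ using Equiv.Perm.swap_induction_on with
    | one => exact (routable G).one_mem
    | swap_mul σ u w _ hσ => exact mul_mem (swap_mem_routable (hG.preconnected u w)) hσ
  have hrtP : RoutesIn G σ (rtP G σ) := Nat.sInf_mem hσ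
  exact hrtP.mono (le_sup (f := rtP G) (mem_univ σ))

end Routable

namespace Stage

variable {H G : SimpleGraph V} (s : Stage H)

def endpoints : s.pairs ⊕ s.pairs → V :=
  Sum.elim (fun p => p.1.1) (fun p => p.1.2)

theorem endpoints_injective : Function.Injective s.endpoints := by
  rintro (⟨p, hp⟩ | ⟨p, hp⟩) (⟨q, hq⟩ | ⟨q, hq⟩) h <;> simp only [endpoints, Sum.elim_inl,
    Sum.elim_inr, Sum.inl.injEq, Sum.inr.injEq, Subtype.mk.injEq, reduceCtorEq] at h ⊢
  · exact s.eq_of_mem_of_mem hp hq (Or.inl rfl) (Or.inl h)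
  · obtain rfl := s.eq_of_mem_of_mem hp hq (Or.inl rfl) (Or.inr h)
    exact (s.adj p hp).ne h
  · obtain rfl := s.eq_of_mem_of_mem hp hq (Or.inr rfl) (Or.inl h)
    exact (s.adj p hp).ne h.symm
  · exact s.eq_of_mem_of_mem hp hq (Or.inr rfl) (Or.inr h)

theorem card_pairs_le [Fintype V] : s.pairs.card ≤ Fintype.card V :=
  card_le_card_of_injOn Prod.fst (fun _ _ => mem_coe.2 (mem_univ _))
    fun _ hp _ hq h => s.eq_of_mem_of_mem hp hq (Or.inl rfl) (Or.inl h)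

theorem exists_perm_mem_pairs (t : Stage G) (h : s.pairs.card ≤ t.pairs.card) :
    ∃ π : Equiv.Perm V, ∀ p ∈ s.pairs, (π p.1, π p.2) ∈ t.pairs := by
  obtain ⟨ι⟩ : Nonempty (s.pairs ↪ t.pairs) :=
    Function.Embedding.nonempty_of_card_le (by simpa using h)
  obtain ⟨π, hπ⟩ := Equiv.Perm.exists_extending_pair s.endpoints (t.endpoints ∘ Sum.map ι ι)
    s.endpoints_injective
    (t.endpoints_injective.comp (Sum.map_injective.2 ⟨ι.injective, ι.injective⟩))
  refine ⟨π, fun p hp => ?_⟩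
  rw [show π p.1 = (ι ⟨p, hp⟩).1.1 from hπ (.inl ⟨p, hp⟩),
    show π p.2 = (ι ⟨p, hp⟩).1.2 from hπ (.inr ⟨p, hp⟩)]
  exact (ι ⟨p, hp⟩).2

end Stage

section Matching

variable {G : SimpleGraph V} {M : Finset (Sym2 V)}

noncomputable def IsMatchingSet.toStage (hM : IsMatchingSet G M) : Stage G where
  pairs := M.map ⟨Quot.out,
    Function.LeftInverse.injective (g := Quot.mk (Sym2.Rel V)) fun e => Quot.out_eq e⟩
  adj := by
    simp only [mem_map]
    rintro _ ⟨e, he, rfl⟩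
    have he := hM.1 he
    rw [← Quot.out_eq e] at he
    exact he
  directed _ := false
  disj := by
    simp only [mem_map]
    rintro _ ⟨e, he, rfl⟩ _ ⟨e', he', rfl⟩ hne
    have hdisj : ∀ v ∈ e, v ∉ e' := fun v hv hv' =>
      hM.2 he he' (by rintro rfl; exact hne rfl) v ⟨hv, hv'⟩
    dsimp only [Function.Embedding.coeFn_mk]
    refine ⟨fun h => ?_, fun h => ?_, fun h => ?_, fun h => ?_⟩
    · exact hdisj _ (Sym2.out_fst_mem e) (by rw [h]; exact Sym2.out_fst_mem e')
    · exact hdisj _ (Sym2.out_fst_mem e) (by rw [h]; exact Sym2.out_snd_mem e')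
    · exact hdisj _ (Sym2.out_snd_mem e) (by rw [h]; exact Sym2.out_fst_mem e')
    · exact hdisj _ (Sym2.out_snd_mem e) (by rw [h]; exact Sym2.out_snd_mem e')

variable [Fintype V]

theorem bddAbove_card_isMatchingSet (G : SimpleGraph V) :
    BddAbove {k | ∃ M : Finset (Sym2 V), IsMatchingSet G M ∧ M.card = k} :=
  ⟨Fintype.card (Sym2 V), by rintro _ ⟨M, -, rfl⟩; exact card_le_univ M⟩

theorem exists_stage_card_eq_nu (G : SimpleGraph V) : ∃ t : Stage G, t.pairs.card = nu G := by
  obtain ⟨M, hM, hcard⟩ : nu G ∈ {k | ∃ M : Finset (Sym2 V), IsMatchingSet G M ∧ M.card = k} :=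
    Nat.sSup_mem ⟨0, ∅, by simp [IsMatchingSet], rfl⟩ (bddAbove_card_isMatchingSet G)
  exact ⟨hM.toStage, (card_map _).trans hcard⟩

theorem nu_pos_of_adj {u w : V} (h : G.Adj u w) : 0 < nu G :=
  Nat.lt_of_lt_of_le Nat.zero_lt_one <| le_csSup (bddAbove_card_isMatchingSet G)
    ⟨{s(u, w)}, ⟨by simpa using h, by simp⟩, card_singleton _⟩

theorem Stage.card_pairs_le_ceil_mul_nu {H : SimpleGraph V} (hG : G.Connected) (s : Stage H) :
    s.pairs.card ≤ (Fintype.card V + nu G - 1) / nu G * nu G := by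
  obtain hs | ⟨p, hp⟩ := s.pairs.eq_empty_or_nonempty
  · simp [hs]
  have : Nontrivial V := ⟨p.1, p.2, (s.adj p hp).ne⟩
  obtain ⟨_, hadj⟩ := hG.preconnected.exists_adj_of_nontrivial p.1
  have hceil := Nat.lt_div_mul_add (a := Fintype.card V + nu G - 1) (nu_pos_of_adj hadj)
  have hcard := s.card_pairs_le
  omega

end Matching

section Simulation

variable {G H : SimpleGraph V}

/-- Started with the key of `v` at `π₀ v`, for any `π₀`, `c` stages of `G` end with the output
of `L` at `v` placed at `π₁ v`, for some `π₁`. -/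
def SimulatesIn (G : SimpleGraph V) (L : List (Stage H)) (c : ℕ) : Prop :=
  ∀ π₀ : Equiv.Perm V, ∃ (L' : List (Stage G)) (π₁ : Equiv.Perm V), L'.length = c ∧
    ∀ f, runNetwork L' (f ∘ π₀.symm) = runNetwork L f ∘ π₁.symm

theorem SimulatesIn.append {L₁ L₂ : List (Stage H)} {c₁ c₂ : ℕ} (h₁ : SimulatesIn G L₁ c₁)
    (h₂ : SimulatesIn G L₂ c₂) : SimulatesIn G (L₁ ++ L₂) (c₁ + c₂) := fun π₀ => by
  obtain ⟨L₁', π, hlen₁, hrun₁⟩ := h₁ π₀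
  obtain ⟨L₂', π₁, hlen₂, hrun₂⟩ := h₂ π
  refine ⟨L₁' ++ L₂', π₁, by simp [hlen₁, hlen₂], fun f => ?_⟩
  rw [runNetwork_append, runNetwork_append, hrun₁, hrun₂]

theorem SimulatesIn.of_forall_mem {c : ℕ} :
    ∀ {L : List (Stage H)}, (∀ s ∈ L, SimulatesIn G [s] c) → SimulatesIn G L (L.length * c)
  | [], _ => fun π₀ => ⟨[], π₀, by simp, fun _ => rfl⟩
  | s :: L, h => by
    rw [List.length_cons, Nat.succ_mul, Nat.add_comm]
    exact (h s List.mem_cons_self).append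
      (of_forall_mem fun t ht => h t (List.mem_cons_of_mem _ ht))

theorem SimulatesIn.congr {L L' : List (Stage H)} {c : ℕ} (h : SimulatesIn G L c)
    (hL : ∀ f, runNetwork L f = runNetwork L' f) : SimulatesIn G L' c := by
  simpa only [SimulatesIn, hL] using h

theorem st_le_of_simulatesIn [Fintype V] {π : V ≃ Fin (Fintype.card V)} {L : List (Stage H)} {c : ℕ}
    (hL : IsSortingNetwork H π L) (h : SimulatesIn G L c) : st G ≤ c := by
  obtain ⟨L', π₁, hlen, hrun⟩ := h 1
  refine Nat.sInf_le ⟨π₁.symm.trans π, L', hlen, fun f hf u w huw => ?_⟩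
  rw [show runNetwork L' f = runNetwork L f ∘ π₁.symm from hrun f]
  exact hL f hf _ _ huw

variable [Fintype V] [DecidableEq V]

theorem simulatesIn_singleton (hG : G.Connected) (s : Stage H) (hs : s.pairs.card ≤ nu G) :
    SimulatesIn G [s] (rt G + 1) := by
  obtain ⟨t, ht⟩ := exists_stage_card_eq_nu G
  obtain ⟨π₁, hπ₁⟩ := s.exists_perm_mem_pairs t (ht ▸ hs)
  intro π₀
  obtain ⟨L, hlen, hrun⟩ := (routesIn_rt hG (π₀.symm.trans π₁)).exists_network
  refine ⟨L ++ [s.relabel π₁ fun p hp => t.adj _ (hπ₁ p hp)], π₁, by simp [hlen],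
    fun f => ?_⟩
  have hkeys : (f ∘ π₀.symm) ∘ (π₀.symm.trans π₁).symm = f ∘ π₁.symm := by
    ext
    simp
  rw [runNetwork_append, hrun, hkeys]
  exact s.relabel_apply f π₁ _

theorem simulatesIn_singleton_of_card_le_mul (hG : G.Connected) (s : Stage H) {k : ℕ}
    (hs : s.pairs.card ≤ k * nu G) : SimulatesIn G [s] (k * (rt G + 1)) := by
  obtain ⟨L, rfl, hcard, hrun⟩ := s.exists_split hs
  exact (SimulatesIn.of_forall_mem fun t ht => simulatesIn_singleton hG t (hcard t ht)).congr hrun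

end Simulation

/-- if there is a sorting network of depth `D` on the complete
graph on the vertices of `G`, then `st(G) ≤ D ⌈n/ν(G)⌉ (rt(G)+1)`. -/
theorem stmt11 {V : Type*} [Fintype V] [DecidableEq V] (G : SimpleGraph V)
    (hG : G.Connected) (D : ℕ)
    (hD : ∃ (π : V ≃ Fin (Fintype.card V)) (L : List (Stage (⊤ : SimpleGraph V))),
      L.length = D ∧ IsSortingNetwork (⊤ : SimpleGraph V) π L) :
    st G ≤ D * ((Fintype.card V + nu G - 1) / nu G) * (rt G + 1) := by
  obtain ⟨π, L, rfl, hL⟩ := hD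
  refine st_le_of_simulatesIn hL ?_
  rw [Nat.mul_assoc]
  exact SimulatesIn.of_forall_mem fun s _ =>
    simulatesIn_singleton_of_card_le_mul hG s (s.card_pairs_le_ceil_mul_nu hG)
end
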